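/- The graph Γ = {(h(α), Φ(α)) : α ∈ Θ^{ℕ≥1}} ⊆ ℝ² of the function g has Hausdorff dimension at most 1. -/

import Mathlib

open Filter Topology MeasureTheory

/-- `α` is a sequence with all terms in `Θ = {1,…,q-1} \ {u}`. -/
def ThetaSeq (q u : ℕ) (α : ℕ → ℕ) : Prop :=
  ∀ n, 1 ≤ α n ∧ α n ≤ q - 1 ∧ α n ≠ u

/-- `S_{n+1}(α) = α_1 + ⋯ + α_{n+1}` (0-indexed: `α i` is the paper's `α_{i+1}`). -/
def Ssum (α : ℕ → ℕ) (n : ℕ) : ℕ := ∑ i ∈ Finset.range (n + 1), α i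

/-- `h(α) = u/(q-1) + ∑_{n≥1} (α_n - u) q^{-S_n(α)}`. -/
noncomputable def hmap (q u : ℕ) (α : ℕ → ℕ) : ℝ :=
  (u : ℝ) / ((q : ℝ) - 1) +
    ∑' n : ℕ, ((α n : ℝ) - (u : ℝ)) / (q : ℝ) ^ (Ssum α n)

/-- `Φ(α) = ∑_{n≥1} α_n q^{-n}`. -/
noncomputable def Phi (q : ℕ) (α : ℕ → ℕ) : ℝ :=
  ∑' n : ℕ, (α n : ℝ) / (q : ℝ) ^ (n + 1)

/-- `D = {h(α) : α ∈ Θ^{ℕ≥1}}`. -/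
def Dset (q u : ℕ) : Set ℝ := {x | ∃ α, ThetaSeq q u α ∧ hmap q u α = x}

/-- `E = {Φ(α) : α ∈ Θ^{ℕ≥1}}`. -/
def Eset (q u : ℕ) : Set ℝ := {y | ∃ α, ThetaSeq q u α ∧ Phi q α = y}

/-! Let `n` be the first index at which two admissible sequences `α`, `β` differ. Then
`h(α) - h(β)` is a series whose terms vanish before `n` and decay like `q⁻¹ ^ k`, so it is
`O(q⁻¹ ^ n)`; in `Φ(α) - Φ(β)` the `n`-th term has size at least `q⁻¹ ^ (n + 1)` and the tail
after it at most `(q - 2) / (q - 1)` times that, so `|Φ(α) - Φ(β)| ≥ q⁻¹ ^ (n + 1) / (q - 1)`.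
Hence `|h(α) - h(β)| ≤ 2q(q + u) |Φ(α) - Φ(β)|`: the projection of `Γ` to the second coordinate
is bi-Lipschitz onto a subset of `ℝ`, and `dimH Γ ≤ dimH ℝ = 1`. -/

open scoped NNReal

section GeometricTail

theorem tsum_eq_tsum_nat_add_of_eq_zero {G : Type*} [AddCommGroup G] [TopologicalSpace G]
    [IsTopologicalAddGroup G] [T2Space G] {f : ℕ → G} {n : ℕ} (hf : ∀ k < n, f k = 0) :
    ∑' k, f k = ∑' k, f (k + n) :=
  tsum_eq_tsum_of_hasSum_iff_hasSum fun {a} => by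
    rw [hasSum_nat_add_iff, Finset.sum_eq_zero fun k hk => hf k (Finset.mem_range.mp hk),
      add_zero]

variable {f : ℕ → ℝ} {C r : ℝ} {n : ℕ}

theorem summable_of_abs_le_geometric (hr0 : 0 ≤ r) (hr1 : r < 1)
    (hf : ∀ k, n ≤ k → |f k| ≤ C * r ^ k) : Summable f := by
  refine (summable_nat_add_iff n).1 <|
    ((summable_geometric_of_lt_one hr0 hr1).mul_left (C * r ^ n)).of_norm_bounded fun k => ?_
  rw [Real.norm_eq_abs]
  exact (hf (k + n) le_add_self).trans_eq (by ring)

theorem abs_tsum_le_of_abs_le_geometric (hr0 : 0 ≤ r) (hr1 : r < 1) (hf0 : ∀ k < n, f k = 0)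
    (hf : ∀ k, n ≤ k → |f k| ≤ C * r ^ k) : |∑' k, f k| ≤ C * r ^ n / (1 - r) := by
  rw [tsum_eq_tsum_nat_add_of_eq_zero hf0, div_eq_mul_inv, ← Real.norm_eq_abs]
  refine tsum_of_norm_bounded ((hasSum_geometric_of_lt_one hr0 hr1).mul_left (C * r ^ n))
    fun k => ?_
  rw [Real.norm_eq_abs]
  exact (hf (k + n) le_add_self).trans_eq (by ring)

theorem abs_sub_le_abs_tsum_of_abs_le_geometric (hr0 : 0 ≤ r) (hr1 : r < 1)
    (hf0 : ∀ k < n, f k = 0) (hf : ∀ k, n < k → |f k| ≤ C * r ^ k) :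
    |f n| - C * r ^ (n + 1) / (1 - r) ≤ |∑' k, f k| := by
  classical
  have htail : |∑' k, if k = n then 0 else f k| ≤ C * r ^ (n + 1) / (1 - r) := by
    refine abs_tsum_le_of_abs_le_geometric hr0 hr1 (fun k hk => ?_) fun k hk => ?_
    · rcases (Nat.lt_succ_iff_lt_or_eq.mp hk) with hk | rfl
      · simp [hk.ne, hf0 k hk]
      · simp
    · simpa [(Nat.succ_le_iff.mp hk).ne'] using hf k hk
  rw [(summable_of_abs_le_geometric (n := n + 1) hr0 hr1 hf).tsum_eq_add_tsum_ite n]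
  have := abs_sub (f n + ∑' k, if k = n then 0 else f k) (∑' k, if k = n then 0 else f k)
  rw [add_sub_cancel_right] at this
  linarith

end GeometricTail

section ThetaSeq

variable {q u : ℕ} {α β : ℕ → ℕ}

theorem ThetaSeq.two_le (hα : ThetaSeq q u α) : 2 ≤ q := by
  have := hα 0
  omega

theorem ThetaSeq.one_lt (hα : ThetaSeq q u α) : (1 : ℝ) < q := by
  exact_mod_cast hα.two_le

theorem ThetaSeq.succ_le_Ssum (hα : ThetaSeq q u α) (k : ℕ) : k + 1 ≤ Ssum α k := by
  simpa [Ssum] using Finset.card_nsmul_le_sum (Finset.range (k + 1)) α 1 fun i _ => (hα i).1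

theorem ThetaSeq.one_le_cast (hα : ThetaSeq q u α) (k : ℕ) : (1 : ℝ) ≤ α k := by
  exact_mod_cast (hα k).1

theorem ThetaSeq.cast_le (hα : ThetaSeq q u α) (k : ℕ) : (α k : ℝ) ≤ q - 1 := by
  rw [le_sub_iff_add_le]
  exact_mod_cast (show α k + 1 ≤ q by have := hα k; omega)

theorem ThetaSeq.abs_sub_le (hα : ThetaSeq q u α) (hβ : ThetaSeq q u β) (k : ℕ) :
    |(α k : ℝ) - β k| ≤ q - 2 := by
  rw [abs_sub_le_iff]
  constructor <;> linarith [hα.one_le_cast k, hα.cast_le k, hβ.one_le_cast k, hβ.cast_le k]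

theorem Ssum_eq_of_lt {n k : ℕ} (hαβ : ∀ i < n, α i = β i) (hk : k < n) :
    Ssum α k = Ssum β k :=
  Finset.sum_congr rfl fun i hi => hαβ i (by rw [Finset.mem_range] at hi; omega)

theorem ThetaSeq.abs_hmap_term_le (hα : ThetaSeq q u α) (k : ℕ) :
    |((α k : ℝ) - u) / (q : ℝ) ^ Ssum α k| ≤ (q + u) * (q : ℝ)⁻¹ * (q : ℝ)⁻¹ ^ k := by
  have hq := hα.one_lt
  have hnum : |(α k : ℝ) - u| ≤ q + u := by
    rw [abs_sub_le_iff]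
    constructor <;> linarith [hα.one_le_cast k, hα.cast_le k, (u.cast_nonneg : (0 : ℝ) ≤ u)]
  have hden : ((q : ℝ) ^ Ssum α k)⁻¹ ≤ (q : ℝ)⁻¹ ^ (k + 1) := by
    rw [← inv_pow]
    exact pow_le_pow_of_le_one (by positivity) (inv_le_one_of_one_le₀ hq.le) (hα.succ_le_Ssum k)
  rw [abs_div, abs_of_pos (pow_pos (zero_lt_one.trans hq) _), div_eq_mul_inv]
  calc |(α k : ℝ) - u| * ((q : ℝ) ^ Ssum α k)⁻¹ ≤ (q + u) * (q : ℝ)⁻¹ ^ (k + 1) :=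
        mul_le_mul hnum hden (by positivity) (by positivity)
    _ = (q + u) * (q : ℝ)⁻¹ * (q : ℝ)⁻¹ ^ k := by ring

theorem ThetaSeq.abs_hmap_sub_le (hα : ThetaSeq q u α) (hβ : ThetaSeq q u β) {n : ℕ}
    (hαβ : ∀ i < n, α i = β i) :
    |hmap q u α - hmap q u β| ≤ 2 * (q + u) * (q : ℝ)⁻¹ ^ n / (q - 1) := by
  have hq := hα.one_lt
  have hr1 : (q : ℝ)⁻¹ < 1 := inv_lt_one_of_one_lt₀ hq
  have hsum (γ) (hγ : ThetaSeq q u γ) :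
      Summable fun k => ((γ k : ℝ) - u) / (q : ℝ) ^ Ssum γ k :=
    summable_of_abs_le_geometric (n := 0) (by positivity) hr1 fun k _ => hγ.abs_hmap_term_le k
  set d : ℕ → ℝ := fun k =>
    ((α k : ℝ) - u) / (q : ℝ) ^ Ssum α k - ((β k : ℝ) - u) / (q : ℝ) ^ Ssum β k
  have hdiff : hmap q u α - hmap q u β = ∑' k, d k := by
    rw [(hsum α hα).tsum_sub (hsum β hβ), hmap, hmap]
    ring
  have htail := abs_tsum_le_of_abs_le_geometric (by positivity) hr1
    (C := 2 * ((q + u) * (q : ℝ)⁻¹)) (f := d) (n := n)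
    (fun k hk => by simp only [d, hαβ k hk, Ssum_eq_of_lt hαβ hk, sub_self])
    fun k _ => (abs_sub _ _).trans (by linarith [hα.abs_hmap_term_le k, hβ.abs_hmap_term_le k])
  rw [hdiff]
  convert htail using 1
  field_simp

theorem ThetaSeq.le_abs_Phi_sub (hα : ThetaSeq q u α) (hβ : ThetaSeq q u β) {n : ℕ}
    (hαβ : ∀ i < n, α i = β i) (hn : α n ≠ β n) :
    (q : ℝ)⁻¹ ^ (n + 1) / (q - 1) ≤ |Phi q α - Phi q β| := by
  have hq := hα.one_lt
  have hr0 : 0 < (q : ℝ)⁻¹ := inv_pos.2 (zero_lt_one.trans hq)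
  have hr1 : (q : ℝ)⁻¹ < 1 := inv_lt_one_of_one_lt₀ hq
  have hsum (γ) (hγ : ThetaSeq q u γ) : Summable fun k => (γ k : ℝ) / (q : ℝ) ^ (k + 1) := by
    refine summable_of_abs_le_geometric (n := 0) (C := (q - 1) * (q : ℝ)⁻¹) (by positivity) hr1
      fun k _ => ?_
    rw [abs_of_nonneg (by positivity), div_eq_mul_inv, ← inv_pow, pow_succ, ← mul_assoc,
      mul_right_comm]
    gcongr
    exact hγ.cast_le k
  set f : ℕ → ℝ := fun k => ((α k : ℝ) - β k) * (q : ℝ)⁻¹ ^ (k + 1)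
  have hdiff : Phi q α - Phi q β = ∑' k, f k := by
    rw [Phi, Phi, ← (hsum α hα).tsum_sub (hsum β hβ)]
    simp only [f, sub_mul, div_eq_mul_inv, inv_pow]
  have hfn : (q : ℝ)⁻¹ ^ (n + 1) ≤ |f n| := by
    have : (1 : ℝ) ≤ |(α n : ℝ) - β n| := by
      exact_mod_cast Int.one_le_abs (sub_ne_zero.mpr (Int.ofNat_inj.not.mpr hn))
    rw [abs_mul, abs_of_pos (pow_pos hr0 _)]
    exact le_mul_of_one_le_left (pow_pos hr0 _).le this
  have hlower := abs_sub_le_abs_tsum_of_abs_le_geometric (by positivity) hr1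
    (C := (q - 2) * (q : ℝ)⁻¹) (f := f) (n := n) (fun k hk => by simp [f, hαβ k hk]) fun k _ => by
      rw [abs_mul, abs_of_pos (pow_pos hr0 _), pow_succ, ← mul_assoc, mul_right_comm]
      gcongr
      exact hα.abs_sub_le hβ k
  calc (q : ℝ)⁻¹ ^ (n + 1) / (q - 1)
      = (q : ℝ)⁻¹ ^ (n + 1) - (q - 2) * (q : ℝ)⁻¹ * (q : ℝ)⁻¹ ^ (n + 1) / (1 - (q : ℝ)⁻¹) := by
        have : (q : ℝ) ≠ 0 := by linarith
        have : (q : ℝ) - 1 ≠ 0 := by linarith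
        field_simp
        ring
    _ ≤ |f n| - (q - 2) * (q : ℝ)⁻¹ * (q : ℝ)⁻¹ ^ (n + 1) / (1 - (q : ℝ)⁻¹) := by gcongr
    _ ≤ |Phi q α - Phi q β| := hdiff ▸ hlower

theorem ThetaSeq.abs_hmap_sub_le_mul_abs_Phi_sub (hα : ThetaSeq q u α) (hβ : ThetaSeq q u β) :
    |hmap q u α - hmap q u β| ≤ 2 * q * (q + u) * |Phi q α - Phi q β| := by
  rcases eq_or_ne α β with rfl | hne
  · simp
  have hq : (q : ℝ) ≠ 0 := by linarith [hα.one_lt]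
  have hαβ (i) (hi : i < PiNat.firstDiff α β) := PiNat.apply_eq_of_lt_firstDiff hi
  calc |hmap q u α - hmap q u β|
      ≤ 2 * (q + u) * (q : ℝ)⁻¹ ^ PiNat.firstDiff α β / (q - 1) := hα.abs_hmap_sub_le hβ hαβ
    _ = 2 * q * (q + u) * ((q : ℝ)⁻¹ ^ (PiNat.firstDiff α β + 1) / (q - 1)) := by
        rw [pow_succ]
        field_simp
    _ ≤ 2 * q * (q + u) * |Phi q α - Phi q β| := by
        gcongr
        exact hα.le_abs_Phi_sub hβ hαβ (PiNat.apply_firstDiff_ne hne)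

end ThetaSeq

theorem dimH_le_one_of_dist_fst_le_mul_dist_snd {X : Type*} [MetricSpace X] {s : Set (X × ℝ)}
    (K : ℝ≥0) (hs : ∀ p ∈ s, ∀ p' ∈ s, dist p.1 p'.1 ≤ K * dist p.2 p'.2) : dimH s ≤ 1 := by
  have hsnd : AntilipschitzWith (max K 1) fun p : s => (p : X × ℝ).2 := by
    refine AntilipschitzWith.of_le_mul_dist fun p p' => ?_
    rw [Subtype.dist_eq, Prod.dist_eq, NNReal.coe_max, NNReal.coe_one]
    have hK := hs p p.2 p' p'.2
    refine max_le (hK.trans ?_) ?_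
    · gcongr
      exact le_max_left _ _
    · exact le_mul_of_one_le_left dist_nonneg (le_max_right _ _)
  calc dimH s = dimH (Set.univ : Set s) := by
        rw [← (isometry_subtype_coe (s := s)).dimH_image, Set.image_univ, Subtype.range_coe]
    _ ≤ dimH ((fun p : s => (p : X × ℝ).2) '' Set.univ) := hsnd.le_dimH_image _
    _ ≤ dimH (Set.univ : Set ℝ) := dimH_mono (Set.subset_univ _)
    _ = 1 := Real.dimH_univ

theorem stmt19_general (q : ℕ) (u : ℕ) :
    dimH {p : ℝ × ℝ | ∃ α, ThetaSeq q u α ∧ p = (hmap q u α, Phi q α)} ≤ 1 := by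
  refine dimH_le_one_of_dist_fst_le_mul_dist_snd (2 * q * (q + u)) ?_
  rintro _ ⟨α, hα, rfl⟩ _ ⟨β, hβ, rfl⟩
  push_cast
  exact hα.abs_hmap_sub_le_mul_abs_Phi_sub hβ

/-- the graph `Γ = {(h(α), Φ(α)) : α ∈ Θ^{ℕ≥1}} ⊆ ℝ²` of `g` has
Hausdorff dimension at most 1. -/
theorem stmt19 (q : ℕ) (hq : 4 ≤ q) (u : ℕ) (hu : u ≤ q - 1) :
    dimH {p : ℝ × ℝ | ∃ α, ThetaSeq q u α ∧ p = (hmap q u α, Phi q α)} ≤ 1 :=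
  stmt19_general q u
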